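/- Let B be a 2D-string with r rows and c columns, where 2^k ≤ r < 2^{k+1} for a non-negative integer k. Then there are at most two integers p > 2^{k−1} with the following property: there exists an integer h with 2^k ≤ h ≤ r such that the subarray B' consisting of the top h rows of B satisfies vper(B') = p and 2p ≤ h. -/
import Mathlib


open scoped Classical

namespace Formal

variable {α : Type*}

/-! ### 2D-strings

An `m × n` 2D-string is modelled as a function `A : ℕ → ℕ → α` considered on
`[0, m) × [0, n)` (0-based indices).  The subarray with top-left corner `(i, j)`,
`r` rows and `c` columns is the window `A[i..i+r-1, j..j+c-1]`. -/

/-- `p` is a horizontal period of the `r × c` subarray of `A` with top-left corner `(i,j)`: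
column `y` equals column `y + p` whenever both are inside the window. -/
def HPeriod (A : ℕ → ℕ → α) (i j r c p : ℕ) : Prop :=
  ∀ x < r, ∀ y, y + p < c → A (i + x) (j + y) = A (i + x) (j + (y + p))

/-- The smallest (positive) horizontal period of the `r × c` subarray of `A`
with top-left corner `(i,j)`. -/
noncomputable def hper (A : ℕ → ℕ → α) (i j r c : ℕ) : ℕ :=
  sInf {p | 0 < p ∧ HPeriod A i j r c p}

/-- `q` is a vertical period of the `r × c` subarray of `A` with top-left corner `(i,j)`. -/
def VPeriod (A : ℕ → ℕ → α) (i j r c q : ℕ) : Prop :=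
  ∀ y < c, ∀ x, x + q < r → A (i + x) (j + y) = A (i + (x + q)) (j + y)

/-- The smallest (positive) vertical period of the `r × c` subarray of `A`
with top-left corner `(i,j)`. -/
noncomputable def vper (A : ℕ → ℕ → α) (i j r c : ℕ) : ℕ :=
  sInf {q | 0 < q ∧ VPeriod A i j r c q}

/-- The pair (smallest horizontal period, smallest vertical period). -/
noncomputable def pers (A : ℕ → ℕ → α) (i j r c : ℕ) : ℕ × ℕ :=
  (hper A i j r c, vper A i j r c)

/-- The subarray `A[i1..i2, j1..j2]` (inclusive, 0-based) of the `n × n` 2D-string `A`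
is a 2D-run: it is horizontally and vertically periodic, and every extension by one
adjacent row or column (whenever it exists within `A`) changes the smallest horizontal
or vertical period. -/
def IsRun2D (A : ℕ → ℕ → α) (n i1 i2 j1 j2 : ℕ) : Prop :=
  i1 ≤ i2 ∧ i2 < n ∧ j1 ≤ j2 ∧ j2 < n ∧
  2 * hper A i1 j1 (i2 - i1 + 1) (j2 - j1 + 1) ≤ j2 - j1 + 1 ∧
  2 * vper A i1 j1 (i2 - i1 + 1) (j2 - j1 + 1) ≤ i2 - i1 + 1 ∧
  (0 < i1 →
    pers A (i1 - 1) j1 (i2 - i1 + 2) (j2 - j1 + 1) ≠ pers A i1 j1 (i2 - i1 + 1) (j2 - j1 + 1)) ∧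
  (i2 + 1 < n →
    pers A i1 j1 (i2 - i1 + 2) (j2 - j1 + 1) ≠ pers A i1 j1 (i2 - i1 + 1) (j2 - j1 + 1)) ∧
  (0 < j1 →
    pers A i1 (j1 - 1) (i2 - i1 + 1) (j2 - j1 + 2) ≠ pers A i1 j1 (i2 - i1 + 1) (j2 - j1 + 1)) ∧
  (j2 + 1 < n →
    pers A i1 j1 (i2 - i1 + 1) (j2 - j1 + 2) ≠ pers A i1 j1 (i2 - i1 + 1) (j2 - j1 + 1))

/-- The subarray `A[i1..i2, j1..j2]` of the `n × n` 2D-string `A` is a horizontal run: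
it is horizontally periodic and extending it by the column to the left or to the right
(whenever it exists within `A`) changes the smallest horizontal period. -/
def IsHRun (A : ℕ → ℕ → α) (n i1 i2 j1 j2 : ℕ) : Prop :=
  i1 ≤ i2 ∧ i2 < n ∧ j1 ≤ j2 ∧ j2 < n ∧
  2 * hper A i1 j1 (i2 - i1 + 1) (j2 - j1 + 1) ≤ j2 - j1 + 1 ∧
  (0 < j1 →
    hper A i1 (j1 - 1) (i2 - i1 + 1) (j2 - j1 + 2) ≠ hper A i1 j1 (i2 - i1 + 1) (j2 - j1 + 1)) ∧
  (j2 + 1 < n →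
    hper A i1 j1 (i2 - i1 + 1) (j2 - j1 + 2) ≠ hper A i1 j1 (i2 - i1 + 1) (j2 - j1 + 1))

/-- The content of the `h × w` subarray of `A` with top-left corner `(i,j)`, encoded
as (height, width, entries).  Two subarrays are equal as arrays iff their contents
are equal. -/
def content (A : ℕ → ℕ → α) (i j h w : ℕ) : ℕ × ℕ × (ℕ → ℕ → Option α) :=
  (h, w, fun x y => if x < h ∧ y < w then some (A (i + x) (j + y)) else none)

/-- The `(a*h) × (b*w)` subarray of `A` with top-left corner `(i,j)` equals `W^{a,b}`,
where `W` is its own top-left `h × w` block: the subarray is tiled by `a × b` copies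
of this block. -/
def OccPow (A : ℕ → ℕ → α) (i j h w a b : ℕ) : Prop :=
  ∀ x < a * h, ∀ y < b * w, A (i + x) (j + y) = A (i + x % h) (j + y % w)

/-- The array `W^{a,b}`, where `W` is an (abstract) `h × w` array, occurs in `A`
at top-left corner `(i,j)`. -/
def OccAt (A : ℕ → ℕ → α) (i j : ℕ) (W : ℕ → ℕ → α) (h w a b : ℕ) : Prop :=
  ∀ x < a * h, ∀ y < b * w, A (i + x) (j + y) = W (x % h) (y % w)

/-- The `h × w` array `W` is primitive: `W = B^{α,β}` implies `α = β = 1`,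
i.e. if `W` is tiled by copies of its top-left `p × q` block with `p ∣ h`, `q ∣ w`,
then `p = h` and `q = w`. -/
def PrimitiveA (W : ℕ → ℕ → α) (h w : ℕ) : Prop :=
  0 < h ∧ 0 < w ∧ ∀ p q, 0 < p → 0 < q → p ∣ h → q ∣ w →
    (∀ x < h, ∀ y < w, W x y = W (x % p) (y % q)) → p = h ∧ q = w

/-- The `h × w` array `W` equals the `h' × w'` array `W'` (as arrays). -/
def ArrEq (W : ℕ → ℕ → α) (h w : ℕ) (W' : ℕ → ℕ → α) (h' w' : ℕ) : Prop :=
  h = h' ∧ w = w' ∧ ∀ x < h, ∀ y < w, W x y = W' x y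

/-- `W` is an `(a,b)`-array, i.e. `2^a ≤ height W < 2^(a+1)` and `2^b ≤ width W < 2^(b+1)`.
Only the dimensions matter. -/
def IsABDims (a b h w : ℕ) : Prop :=
  2 ^ a ≤ h ∧ h < 2 ^ (a + 1) ∧ 2 ^ b ≤ w ∧ w < 2 ^ (b + 1)

/-- The set of contents of all distinct quartics (arrays of the form `W^{2,2}`)
occurring as subarrays of the `n × n` 2D-string `A`. -/
def QuarticContents (A : ℕ → ℕ → α) (n : ℕ) : Set (ℕ × ℕ × (ℕ → ℕ → Option α)) :=
  {c | ∃ i j h w, 0 < h ∧ 0 < w ∧ i + 2 * h ≤ n ∧ j + 2 * w ≤ n ∧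
    OccPow A i j h w 2 2 ∧ c = content A i j (2 * h) (2 * w)}

/-- The set of contents of all distinct tandems (arrays of the form `W^{1,2}`)
occurring as subarrays of the `n × n` 2D-string `A`. -/
def TandemContents (A : ℕ → ℕ → α) (n : ℕ) : Set (ℕ × ℕ × (ℕ → ℕ → Option α)) :=
  {c | ∃ i j h w, 0 < h ∧ 0 < w ∧ i + h ≤ n ∧ j + 2 * w ≤ n ∧
    OccPow A i j h w 1 2 ∧ c = content A i j h (2 * w)}

/-- The set of contents of all distinct thin quartics of the `n × n` 2D-string `A`:
quartics `W^{2a,2b}` with `W` primitive which are not primitively rooted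
(`¬(a = 1 ∧ b = 1)`) and have `a = 1` or `b = 1`. -/
def ThinQuarticContents (A : ℕ → ℕ → α) (n : ℕ) : Set (ℕ × ℕ × (ℕ → ℕ → Option α)) :=
  {c | ∃ i j h w a b, 0 < a ∧ 0 < b ∧ (a = 1 ∨ b = 1) ∧ ¬(a = 1 ∧ b = 1) ∧
    PrimitiveA (fun x y => A (i + x) (j + y)) h w ∧
    i + 2 * a * h ≤ n ∧ j + 2 * b * w ≤ n ∧
    OccPow A i j h w (2 * a) (2 * b) ∧ c = content A i j (2 * a * h) (2 * b * w)}

/-! ### 1D-strings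

A string of length `n` is modelled as `S : ℕ → α` considered on `[0, n)` (0-based). -/

/-- `p` is a period of the factor `S[i..j]` (inclusive, 0-based). -/
def FPeriod (S : ℕ → α) (i j p : ℕ) : Prop :=
  ∀ k, i ≤ k → k + p ≤ j → S k = S (k + p)

/-- The smallest (positive) period of the factor `S[i..j]`. -/
noncomputable def fper (S : ℕ → α) (i j : ℕ) : ℕ :=
  sInf {p | 0 < p ∧ FPeriod S i j p}

/-- The factor `S[i..j]` of the length-`n` string `S` is a run (maximal repetition). -/
def IsRun1D (S : ℕ → α) (n i j : ℕ) : Prop :=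
  i ≤ j ∧ j < n ∧ 2 * fper S i j ≤ j - i + 1 ∧
  (0 < i → S (i - 1) ≠ S (i - 1 + fper S i j)) ∧
  (j + 1 < n → S (j + 1) ≠ S (j + 1 - fper S i j))

/-- The factor `S[a..a+m-1]` is a primitive string: it is nonempty and is not a proper
power, i.e. it has no period `d < m` dividing `m`. -/
def PrimitiveF (S : ℕ → α) (a m : ℕ) : Prop :=
  0 < m ∧ ∀ d, 0 < d → d ∣ m → (∀ x, x + d < m → S (a + x) = S (a + (x + d))) → d = m


universe v


variable {β : Type v}

/-- period d on prefix [0,n) -/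
def Per (T : ℕ → β) (n d : ℕ) : Prop := ∀ x, x + d < n → T x = T (x + d)

lemma per_mono {T : ℕ → β} {n m d : ℕ} (h : Per T n d) (hmn : m ≤ n) : Per T m d :=
  fun x hx => h x (lt_of_lt_of_le hx hmn)

lemma per_mod {T : ℕ → β} {n d : ℕ} (h : Per T n d) (hd : 0 < d) :
    ∀ x, x < n → T x = T (x % d) := by
  intro x
  induction x using Nat.strong_induction_on with
  | _ x ih =>
    intro hx
    by_cases hxd : x < d
    · rw [Nat.mod_eq_of_lt hxd]
    · push_neg at hxd
      have h1 : (x - d) + d < n := by omega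
      have h2 := h (x - d) h1
      have h3 : x - d < x := by omega
      have h4 := ih (x - d) h3 (by omega)
      rw [Nat.mod_eq_sub_mod hxd]
      have : (x - d) + d = x := by omega
      rw [this] at h2
      rw [← h2, h4]

lemma per_sub {T : ℕ → β} {n a b : ℕ} (ha : Per T n a) (hb : Per T n b) (hab : a ≤ b) :
    Per T (n - a) (b - a) := by
  intro x hx
  have h1 : x + b < n := by omega
  have h2 : (x + (b - a)) + a < n := by omega
  have e1 := hb x h1
  have e2 := ha (x + (b - a)) h2
  have : x + (b - a) + a = x + b := by omega
  rw [this] at e2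
  rw [e1, e2]

lemma per_lift {T : ℕ → β} {n m P d : ℕ} (hP : Per T n P) (hd : Per T m d)
    (hP0 : 0 < P) (hm : P + d ≤ m) (hmn : m ≤ n) : Per T n d := by
  intro x
  induction x using Nat.strong_induction_on with
  | _ x ih =>
    intro hx
    by_cases hxm : x + d < m
    · exact hd x hxm
    · have hxP : P ≤ x := by omega
      have e1 := hP (x - P) (by omega)
      have e2 := hP (x - P + d) (by omega)
      have e3 := ih (x - P) (by omega) (by omega)
      have r1 : x - P + P = x := by omega
      have r2 : x - P + d + P = x + d := by omega
      rw [r1] at e1; rw [r2] at e2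
      rw [← e1, ← e2, e3]

lemma per_lift_dvd {T : ℕ → β} {n m P d : ℕ} (hP : Per T n P) (hd : Per T m d)
    (hdvd : d ∣ P) (hd0 : 0 < d) (hP0 : 0 < P) (hPm : P ≤ m) (hmn : m ≤ n) : Per T n d := by
  intro x hx
  have e1 := per_mod hP hP0 x (by omega)
  have e2 := per_mod hP hP0 (x + d) hx
  have e3 := per_mod hd hd0 (x % P) (by have := Nat.mod_lt x hP0; omega)
  have e4 := per_mod hd hd0 ((x + d) % P) (by have := Nat.mod_lt (x + d) hP0; omega)
  have key : (x + d) % P % d = x % P % d := by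
    rw [Nat.mod_mod_of_dvd _ hdvd, Nat.mod_mod_of_dvd _ hdvd, Nat.add_mod_right]
  rw [e1, e2, e3, e4, key]


/-- weak Fine and Wilf: two periods `a,b` with `a + b ≤ n` give period `gcd a b`. -/
lemma per_fw {T : ℕ → β} : ∀ (N a b n : ℕ), a + b ≤ N → Per T n a → Per T n b →
    0 < a → 0 < b → a + b ≤ n → Per T n (Nat.gcd a b) := by
  intro N
  induction N with
  | zero => intro a b n h _ _ ha _ _; omega
  | succ N ihN =>
    intro a b n hN ha hb ha0 hb0 hab
    rcases le_total a b with hle | hle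
    · by_cases hdvd : a ∣ b
      · rwa [Nat.gcd_eq_left hdvd]
      · have hlt : a < b := lt_of_le_of_ne hle (by rintro rfl; exact hdvd dvd_rfl)
        have hb' : Per T (n - a) (b - a) := per_sub ha hb hle
        have ha' : Per T (n - a) a := per_mono ha (by omega)
        have ih := ihN a (b - a) (n - a) (by omega) ha' hb' ha0 (by omega) (by omega)
        have hg : Nat.gcd a (b - a) = Nat.gcd a b := Nat.gcd_sub_self_right hle
        rw [hg] at ih
        -- extend from [0, n-a) to [0, n)
        set g := Nat.gcd a b with hgdef
        intro x hx
        by_cases hxm : x + g < n - a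
        · exact ih x hxm
        · have hgd : g ∣ b - a := Nat.dvd_sub (Nat.gcd_dvd_right a b) (Nat.gcd_dvd_left a b)
          have hgba : g ≤ b - a := Nat.le_of_dvd (by omega) hgd
          have hxa : a ≤ x := by omega
          have e1 := ha (x - a) (by omega)
          have e2 := ha (x - a + g) (by omega)
          have e3 := ih (x - a) (by omega)
          have r1 : x - a + a = x := by omega
          have r2 : x - a + g + a = x + g := by omega
          rw [r1] at e1; rw [r2] at e2
          rw [← e1, e3, e2]
    · by_cases hdvd : b ∣ a
      · rwa [Nat.gcd_eq_right hdvd]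
      · have hlt : b < a := lt_of_le_of_ne hle (by rintro rfl; exact hdvd dvd_rfl)
        have ha' : Per T (n - b) (a - b) := per_sub hb ha hle
        have hb' : Per T (n - b) b := per_mono hb (by omega)
        have ih := ihN b (a - b) (n - b) (by omega) hb' ha' hb0 (by omega) (by omega)
        have hg : Nat.gcd b (a - b) = Nat.gcd b a := Nat.gcd_sub_self_right hle
        rw [hg, Nat.gcd_comm b a] at ih
        set g := Nat.gcd a b with hgdef
        intro x hx
        by_cases hxm : x + g < n - b
        · exact ih x hxm
        · have hgd : g ∣ a - b := Nat.dvd_sub (Nat.gcd_dvd_left a b) (Nat.gcd_dvd_right a b)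
          have hgba : g ≤ a - b := Nat.le_of_dvd (by omega) hgd
          have hxa : b ≤ x := by omega
          have e1 := hb (x - b) (by omega)
          have e2 := hb (x - b + g) (by omega)
          have e3 := ih (x - b) (by omega)
          have r1 : x - b + b = x := by omega
          have r2 : x - b + g + b = x + g := by omega
          rw [r1] at e1; rw [r2] at e2
          rw [← e1, e3, e2]

/-- any interval of `L` consecutive integers starting at `a` covers every residue mod `L` -/
lemma mod_cover (a L z : ℕ) (hL : 0 < L) : ∃ x, a ≤ x ∧ x < a + L ∧ x % L = z % L := by
  refine ⟨a + ((z + L - a % L) % L), by omega, by have := Nat.mod_lt (z + L - a % L) hL; omega, ?_⟩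
  have h1 : a % L ≤ L := le_of_lt (Nat.mod_lt a hL)
  have hme : (z + L - a % L) % L ≡ z + L - a % L [MOD L] := Nat.mod_modEq _ _
  have h2 : a + (z + L - a % L) % L ≡ a + (z + L - a % L) [MOD L] := Nat.ModEq.add_left a hme
  have hle2 : a % L ≤ a := Nat.mod_le a L
  have h3 : a + (z + L - a % L) = (a - a % L) + (z + L) := by omega
  have h4 : L ∣ a - a % L := by
    have := Nat.mod_add_div a L
    refine ⟨a / L, by omega⟩
  have h5 : (a - a % L) + (z + L) ≡ 0 + (z + L) [MOD L] := Nat.ModEq.add_right _ (Nat.modEq_zero_iff_dvd.mpr h4)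
  have h6 : a + (z + L - a % L) % L ≡ z + L [MOD L] := by
    rw [h3] at h2; simpa using h2.trans h5
  have h7 : z + L ≡ z [MOD L] := by simpa using (Nat.add_modEq_left (n := L) (a := z)).symm
  exact h6.trans h7

section Rot
variable {T : ℕ → β} {γ : ℕ}

/-- `d` is a rotation-symmetry of the first `γ` values of `T`. -/
def Rot (T : ℕ → β) (γ d : ℕ) : Prop := ∀ z, z < γ → T ((z + d) % γ) = T z

lemma rot_self (hγ : 0 < γ) : Rot T γ γ := by
  intro z hz
  rw [Nat.add_mod_right, Nat.mod_eq_of_lt hz]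

lemma rot_add {d e : ℕ} (hd : Rot T γ d) (he : Rot T γ e) : Rot T γ (d + e) := by
  intro z hz
  have hγ : 0 < γ := by omega
  have h1 : (z + (d + e)) % γ = ((z + d) % γ + e) % γ := by
    rw [Nat.mod_add_mod, Nat.add_assoc]
  rw [h1, he _ (Nat.mod_lt _ hγ), hd _ hz]

lemma rot_mul {d : ℕ} (hd : Rot T γ d) : ∀ k, 0 < k → Rot T γ (k * d) := by
  intro k
  induction k with
  | zero => omega
  | succ k ih =>
    intro _
    by_cases hk : 0 < k
    · have : (k + 1) * d = k * d + d := by ring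
      rw [this]; exact rot_add (ih hk) hd
    · have : k = 0 := by omega
      subst this; simpa using hd

lemma rot_sub {d e : ℕ} (hd : Rot T γ d) (he : Rot T γ e) (hde : d ≤ e) : Rot T γ (e - d) := by
  intro z hz
  have hγ : 0 < γ := by omega
  have h1 := hd ((z + (e - d)) % γ) (Nat.mod_lt _ hγ)
  have h2 : ((z + (e - d)) % γ + d) % γ = (z + e) % γ := by
    rw [Nat.mod_add_mod]; congr 1; omega
  rw [h2] at h1
  rw [← h1, he _ hz]

lemma rot_gcd : ∀ (a : ℕ) {b : ℕ}, Rot T γ a → Rot T γ b → 0 < b → Rot T γ (Nat.gcd a b) := by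
  intro a
  induction a using Nat.strong_induction_on with
  | _ a ih =>
    intro b ha hb hb0
    by_cases ha0 : a = 0
    · subst ha0; simpa [Nat.gcd_zero_left] using hb
    · have hmd := Nat.mod_add_div b a
      have hcomm : a * (b / a) = (b / a) * a := Nat.mul_comm _ _
      have hmod : b % a = b - (b / a) * a := by omega
      have hdiv : (b / a) * a ≤ b := by omega
      have hba : Rot T γ (b % a) := by
        by_cases hq : 0 < b / a
        · rw [hmod]
          exact rot_sub (rot_mul ha (b / a) hq) hb hdiv
        · have : b / a = 0 := Nat.eq_zero_of_not_pos hq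
          rw [hmod, this]; simpa using hb
      have := ih (b % a) (Nat.mod_lt _ (by omega)) hba ha (by omega)
      rwa [Nat.gcd_rec a b]

end Rot

/-- Key lemma: three close prefix periods are impossible. -/
lemma key {T : ℕ → β} {p q s n Kq Ks : ℕ}
    (hpq : p < q) (hqs : q < s) (hs2p : s < 2 * p)
    (hn2p : 2 * p ≤ n)
    (hPp : Per T n p) (hmin : ∀ d, 0 < d → Per T n d → p ≤ d)
    (hQ : Per T Kq q) (hKq : 2 * q ≤ Kq)
    (hS : Per T Ks s) (hKs : 2 * s ≤ Ks) : False := by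
  have hp0 : 0 < p := by omega
  by_cases hcase : n < p + q
  · -- hard case
    set K := min Kq Ks with hKdef
    have hK2q : 2 * q ≤ K := by
      have : 2 * q ≤ Ks := by omega
      omega
    have hQK : Per T K q := per_mono hQ (by omega)
    have hSK : Per T K s := per_mono hS (by omega)
    set τ := s - q with hτdef
    have hτK : Per T (K - q) τ := per_sub hQK hSK (by omega)
    set m := n - p with hmdef
    have hQn : Per T n q := per_mono hQ (by omega)
    set d1 := q - p with hd1def
    have hd1m : Per T m d1 := per_sub hPp hQn (by omega)
    have hτm : Per T m τ := per_mono hτK (by omega)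
    set γ := Nat.gcd d1 τ with hγdef
    have hγm : Per T m γ := per_fw (d1 + τ) d1 τ m le_rfl hd1m hτm (by omega) (by omega) (by omega)
    have hγd1 : γ ∣ d1 := Nat.gcd_dvd_left _ _
    have hγτ : γ ∣ τ := Nat.gcd_dvd_right _ _
    have hγ0 : 0 < γ := Nat.gcd_pos_of_pos_left _ (by omega)
    have hγled1 : γ ≤ d1 := Nat.le_of_dvd (by omega) hγd1
    have hγleτ : γ ≤ τ := Nat.le_of_dvd (by omega) hγτ
    have hτ0 : τ % γ = 0 := by
      obtain ⟨t, ht⟩ := hγτ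
      rw [ht]; exact Nat.mul_mod_right γ t
    -- rotation symmetry by p
    have hrotp : Rot T γ p := by
      intro z hz
      obtain ⟨x, hx1, hx2, hx3⟩ := mod_cover (p - τ) γ (z + p) hγ0
      have hxp : x < p := by omega
      have hxq : x + τ < q := by omega
      have e1 : T x = T (x % γ) := per_mod hγm hγ0 x (by omega)
      have e2 : T x = T (x + τ) := hτK x (by omega)
      have e3 : T (x + τ - p) = T (x + τ) := by
        have := hPp (x + τ - p) (by omega)
        have hr : x + τ - p + p = x + τ := by omega
        rwa [hr] at this
      have e4 : T (x + τ - p) = T ((x + τ - p) % γ) := per_mod hγm hγ0 _ (by omega)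
      have c1 : (x + τ) % γ = x % γ := by
        rw [Nat.add_mod, hτ0, Nat.add_zero, Nat.mod_mod_of_dvd x dvd_rfl]
      have c2 : (x + τ - p) % γ = z := by
        have hb : x + τ - p + p = x + τ := by omega
        have hcong : (x + τ - p + p) % γ = (z + p) % γ := by
          rw [hb, c1, hx3]
        have hcc : x + τ - p ≡ z [MOD γ] := Nat.ModEq.add_right_cancel' p hcong
        have h5 : (x + τ - p) % γ = z % γ := hcc
        rwa [Nat.mod_eq_of_lt hz] at h5
      calc T ((z + p) % γ) = T (x % γ) := by rw [hx3]
        _ = T x := e1.symm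
        _ = T (x + τ) := e2
        _ = T (x + τ - p) := e3.symm
        _ = T ((x + τ - p) % γ) := e4
        _ = T z := by rw [c2]
    -- gcd of p and γ is a rotation, hence a small period, contradiction
    set ν := Nat.gcd p γ with hνdef
    have hrotν : Rot T γ ν := rot_gcd p hrotp (rot_self hγ0) hγ0
    have hν0 : 0 < ν := Nat.gcd_pos_of_pos_left _ hp0
    have hνp : ν ∣ p := Nat.gcd_dvd_left _ _
    have hνγ : ν ∣ γ := Nat.gcd_dvd_right _ _
    have hνlt : ν < p := by
      have : ν ≤ γ := Nat.le_of_dvd hγ0 hνγ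
      omega
    have hνm : Per T m ν := by
      intro x hx
      have e1 : T x = T (x % γ) := per_mod hγm hγ0 x (by omega)
      have e2 : T (x + ν) = T ((x + ν) % γ) := per_mod hγm hγ0 _ hx
      have e3 : (x + ν) % γ = (x % γ + ν) % γ := by
        rw [Nat.mod_add_mod]
      have e4 := hrotν (x % γ) (Nat.mod_lt _ hγ0)
      rw [e1, e2, e3, e4]
    have hlift : Per T n ν := per_lift_dvd hPp hνm hνp hν0 hp0 (by omega) (by omega)
    have := hmin ν hν0 hlift
    omega
  · -- easy case
    push_neg at hcase
    set n' := min n Kq with hn'def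
    have hn'pq : p + q ≤ n' := by omega
    have hp' : Per T n' p := per_mono hPp (by omega)
    have hq' : Per T n' q := per_mono hQ (by omega)
    have hd1 : Per T (n' - p) (q - p) := per_sub hp' hq' (by omega)
    have hlift : Per T n (q - p) := per_lift hPp hd1 hp0 (by omega) (by omega)
    have := hmin (q - p) (by omega) hlift
    omega



/-- Let `B` be a 2D-string with `r` rows and `c` columns, where
`2^k ≤ r < 2^(k+1)`. There are at most two integers `p > 2^(k−1)` (expressed as
`2^k < 2p`) such that `p = vper(B') ≤ height(B')/2` for some prefix `B'` of `B`
consisting of its top `h ≥ 2^k` rows. -/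
theorem at_most_two_large_vertical_periods {α : Type*} (B : ℕ → ℕ → α) (r c k : ℕ)
    (h₁ : 2 ^ k ≤ r) (h₂ : r < 2 ^ (k + 1)) :
    ({p : ℕ | 2 ^ k < 2 * p ∧
        ∃ h, 2 ^ k ≤ h ∧ h ≤ r ∧ 2 * p ≤ h ∧ vper B 0 0 h c = p}).ncard ≤ 2 := by
  set T : ℕ → (ℕ → Option α) := fun x y => if y < c then some (B x y) else none with hT
  set S : Set ℕ := {p : ℕ | 2 ^ k < 2 * p ∧
      ∃ h, 2 ^ k ≤ h ∧ h ≤ r ∧ 2 * p ≤ h ∧ vper B 0 0 h c = p} with hSdef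
  have hVP : ∀ h q, VPeriod B 0 0 h c q ↔ Per T h q := by
    intro h q
    constructor
    · intro hv x hx
      funext y
      by_cases hy : y < c
      · have := hv y hy x hx
        simp only [Nat.zero_add] at this
        simp only [hT, if_pos hy, this]
      · simp only [hT, if_neg hy]
    · intro hp y hy x hx
      have := congrFun (hp x hx) y
      simp only [hT, if_pos hy] at this
      simpa using Option.some.inj this
  have hmem : ∀ p ∈ S, 0 < p ∧ 2 ^ k < 2 * p ∧ ∃ h, 2 ^ k ≤ h ∧ h ≤ r ∧ 2 * p ≤ h ∧
      Per T h p ∧ ∀ d, 0 < d → Per T h d → p ≤ d := by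
    intro p hp
    simp only [hSdef, Set.mem_setOf_eq] at hp
    obtain ⟨hk2p, h, hh1, hh2, hh3, hv⟩ := hp
    have hne : {q | 0 < q ∧ VPeriod B 0 0 h c q}.Nonempty := by
      refine ⟨h, ?_, ?_⟩
      · have : (1:ℕ) ≤ 2 ^ k := Nat.one_le_two_pow
        omega
      · intro y hy x hx; omega
    have hmemInf := Nat.sInf_mem hne
    rw [show sInf {q | 0 < q ∧ VPeriod B 0 0 h c q} = vper B 0 0 h c from rfl, hv] at hmemInf
    obtain ⟨hp0, hvp⟩ := hmemInf
    refine ⟨hp0, hk2p, h, hh1, hh2, hh3, (hVP h p).1 hvp, ?_⟩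
    intro d hd0 hdP
    have : vper B 0 0 h c ≤ d := Nat.sInf_le ⟨hd0, (hVP h d).2 hdP⟩
    omega
  have key3 : ∀ p q s : ℕ, p ∈ S → q ∈ S → s ∈ S → p < q → q < s → False := by
    intro p q s hp hq hs hpq hqs
    obtain ⟨hp0, hpk, n, hn1, hn2, hn3, hPp, hpmin⟩ := hmem p hp
    obtain ⟨hq0, hqk, Kq, hq1, hq2, hq3, hQ, -⟩ := hmem q hq
    obtain ⟨hs0, hsk, Ks, hs1, hs2', hs3, hS', -⟩ := hmem s hs
    have hpow : 2 ^ (k+1) = 2 * 2 ^ k := by ring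
    have hs2p : s < 2 * p := by omega
    exact key hpq hqs hs2p hn3 hPp hpmin hQ hq3 hS' hs3
  by_contra hcon
  push_neg at hcon
  have hsub : S ⊆ Set.Iio (2 ^ k) := by
    intro p hp
    obtain ⟨hp0, hpk, n, hn1, hn2, hn3, -, -⟩ := hmem p hp
    have hpow : 2 ^ (k+1) = 2 * 2 ^ k := by ring
    simp only [Set.mem_Iio]
    omega
  have hfin : S.Finite := (Set.finite_Iio _).subset hsub
  have hcard : 2 < hfin.toFinset.card := by
    rwa [Set.ncard_eq_toFinset_card S hfin] at hcon
  obtain ⟨a, b, d, ha, hb, hd, hab, had, hbd⟩ := Finset.two_lt_card_iff.1 hcard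
  rw [Set.Finite.mem_toFinset] at ha hb hd
  rcases Nat.lt_trichotomy a b with h1 | h1 | h1
  · rcases Nat.lt_trichotomy b d with h2 | h2 | h2
    · exact key3 a b d ha hb hd h1 h2
    · exact hbd h2
    · rcases Nat.lt_trichotomy a d with h3 | h3 | h3
      · exact key3 a d b ha hd hb h3 h2
      · exact had h3
      · exact key3 d a b hd ha hb h3 h1
  · exact hab h1
  · rcases Nat.lt_trichotomy a d with h2 | h2 | h2
    · exact key3 b a d hb ha hd h1 h2
    · exact had h2
    · rcases Nat.lt_trichotomy b d with h3 | h3 | h3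
      · exact key3 b d a hb hd ha h3 h2
      · exact hbd h3
      · exact key3 d b a hd hb ha h3 h1

end Formal
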